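/- arXiv:cs/0507039 — 3 statements merged into one kernel-verified Lean document; each statement's English description precedes it below -/
import Mathlib

section
/- Let C be a closed subspace of a real Hilbert space X and P_C the orthogonal projection onto C. For the alternating sequence x₀ = x̂, xₙ = P_{C} xₙ₋₁, the sequence is constant after the first step: xₙ = P_C(x̂) for all n ≥ 1. More generally, for two closed subspaces C₁, C₂, the von Neumann alternating projection sequence xₙ = (P_{C₂}P_{C₁})ⁿ x̂ converges in norm to P_{C₁∩C₂}(x̂). -/
/-!
Write `P₁, P₂` for the two projections. Since `P₁` is idempotent, `(P₂P₁)ⁿ⁺¹ = P₂ Sⁿ P₁` with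
`S = P₁P₂P₁`, a symmetric operator with `S² ≤ S`, i.e. `‖S v‖² ≤ ⟪S v, v⟫`. For such an `S` the
numbers `aₙ = ⟪Sⁿ v, v⟫` decrease and `a₂ₙ = ‖Sⁿ v‖² ≥ 0`, so they converge; as
`‖Sᵐ v - Sⁿ v‖² = a₂ₘ + a₂ₙ - 2 aₘ₊ₙ`, the sequence `Sⁿ v` is Cauchy. Its limit is fixed by `S`,
and `v` minus it is orthogonal to the fixed vectors of `S`, so it is the projection of `v` onto
them; for `S = P₁P₂P₁` these are exactly the vectors of `C₁ ⊓ C₂`.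
-/

open Filter Topology RealInnerProductSpace Submodule

theorem IsIdempotentElem.mul_pow_succ {M : Type*} [Monoid M] {p : M} (hp : IsIdempotentElem p)
    (q : M) (n : ℕ) : (q * p) ^ (n + 1) = q * (p * q * p) ^ n * p := by
  induction n with
  | zero => simp
  | succ n ih => simp only [pow_succ _ (n + 1), ih, pow_succ, mul_assoc, hp.eq]

namespace LinearMap

variable {E : Type*} [NormedAddCommGroup E] [InnerProductSpace ℝ E] {S : E →ₗ[ℝ] E}

theorem norm_apply_le_of_norm_sq_le_inner (hS2 : ∀ v, ‖S v‖ ^ 2 ≤ ⟪S v, v⟫) (v : E) :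
    ‖S v‖ ≤ ‖v‖ := by
  have hle := (hS2 v).trans (real_inner_le_norm (S v) v)
  nlinarith [norm_nonneg (S v), norm_nonneg v]

namespace IsSymmetric

theorem inner_pow_add_apply (hS : S.IsSymmetric) (m n : ℕ) (v : E) :
    ⟪(S ^ (m + n)) v, v⟫ = ⟪(S ^ m) v, (S ^ n) v⟫ := by
  rw [pow_add, Module.End.mul_apply, hS.pow m, real_inner_comm]

theorem inner_pow_two_mul_apply (hS : S.IsSymmetric) (k : ℕ) (v : E) :
    ⟪(S ^ (2 * k)) v, v⟫ = ‖(S ^ k) v‖ ^ 2 := by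
  rw [two_mul, hS.inner_pow_add_apply, real_inner_self_eq_norm_sq]

theorem inner_pow_two_mul_add_one_apply (hS : S.IsSymmetric) (k : ℕ) (v : E) :
    ⟪(S ^ (2 * k + 1)) v, v⟫ = ⟪S ((S ^ k) v), (S ^ k) v⟫ := by
  rw [two_mul, add_right_comm, hS.inner_pow_add_apply, pow_succ', Module.End.mul_apply]

theorem antitone_inner_pow_apply (hS : S.IsSymmetric) (hS2 : ∀ v, ‖S v‖ ^ 2 ≤ ⟪S v, v⟫)
    (v : E) : Antitone fun n => ⟪(S ^ n) v, v⟫ := by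
  refine antitone_nat_of_succ_le fun n => ?_
  obtain ⟨k, rfl | rfl⟩ := Nat.even_or_odd' n
  · set w := (S ^ k) v
    calc ⟪(S ^ (2 * k + 1)) v, v⟫ = ⟪S w, w⟫ := hS.inner_pow_two_mul_add_one_apply k v
      _ ≤ ‖S w‖ * ‖w‖ := real_inner_le_norm _ _
      _ ≤ ‖w‖ * ‖w‖ := by gcongr; exact norm_apply_le_of_norm_sq_le_inner hS2 w
      _ = ⟪(S ^ (2 * k)) v, v⟫ := by rw [hS.inner_pow_two_mul_apply, sq]
  · set w := (S ^ k) v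
    calc ⟪(S ^ (2 * (k + 1))) v, v⟫ = ‖S w‖ ^ 2 := by
          rw [hS.inner_pow_two_mul_apply, pow_succ' S k, Module.End.mul_apply]
      _ ≤ ⟪S w, w⟫ := hS2 w
      _ = ⟪(S ^ (2 * k + 1)) v, v⟫ := (hS.inner_pow_two_mul_add_one_apply k v).symm

theorem cauchySeq_pow_apply (hS : S.IsSymmetric) (hS2 : ∀ v, ‖S v‖ ^ 2 ≤ ⟪S v, v⟫)
    (v : E) : CauchySeq fun n => (S ^ n) v := by
  set a : ℕ → ℝ := fun n => ⟪(S ^ n) v, v⟫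
  have ha : Antitone a := hS.antitone_inner_pow_apply hS2 v
  have hbdd : BddBelow (Set.range a) := ⟨0, by
    rintro _ ⟨n, rfl⟩
    calc (0 : ℝ) ≤ ‖(S ^ n) v‖ ^ 2 := sq_nonneg _
      _ = a (2 * n) := (hS.inner_pow_two_mul_apply n v).symm
      _ ≤ a n := ha (by omega)⟩
  have hlim : Tendsto a atTop (𝓝 (⨅ n, a n)) := tendsto_atTop_ciInf ha hbdd
  have hdist : ∀ m n,
      dist ((S ^ m) v) ((S ^ n) v) ^ 2 = a (2 * m) + a (2 * n) - 2 * a (m + n) := fun m n => by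
    simp only [a, dist_eq_norm, norm_sub_sq_real, hS.inner_pow_two_mul_apply,
      hS.inner_pow_add_apply]
    ring
  have hdouble : Tendsto (fun n : ℕ => 2 * n) atTop atTop :=
    tendsto_atTop_atTop.2 fun b => ⟨b, fun n hn => by omega⟩
  have hsum : Tendsto (fun p : ℕ × ℕ => p.1 + p.2) (atTop ×ˢ atTop) atTop :=
    tendsto_atTop_mono (fun p => Nat.le_add_right _ _) tendsto_fst
  have hsq : Tendsto (fun p : ℕ × ℕ => dist ((S ^ p.1) v) ((S ^ p.2) v) ^ 2) (atTop ×ˢ atTop)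
      (𝓝 0) := by
    have hlim2 := ((hlim.comp (hdouble.comp tendsto_fst)).add
      (hlim.comp (hdouble.comp tendsto_snd))).sub ((hlim.comp hsum).const_mul 2)
    rw [show ∀ l : ℝ, l + l - 2 * l = 0 from fun l => by ring] at hlim2
    simp only [hdist]
    exact hlim2
  rw [cauchySeq_iff_tendsto_dist_atTop_0, ← prod_atTop_atTop_eq]
  simpa only [Real.sqrt_sq dist_nonneg, Real.sqrt_zero] using hsq.sqrt

end IsSymmetric

end LinearMap

theorem ContinuousLinearMap.tendsto_pow_apply_starProjection {E : Type*} [NormedAddCommGroup E]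
    [InnerProductSpace ℝ E] [CompleteSpace E] {S : E →L[ℝ] E}
    (hS : (S : E →ₗ[ℝ] E).IsSymmetric) (hS2 : ∀ v, ‖S v‖ ^ 2 ≤ ⟪S v, v⟫)
    (K : Submodule ℝ E) [K.HasOrthogonalProjection] (hK : ∀ w, S w = w ↔ w ∈ K) (v : E) :
    Tendsto (fun n => (S ^ n) v) atTop (𝓝 (K.starProjection v)) := by
  have hpow : ∀ n u, ((S : E →ₗ[ℝ] E) ^ n) u = (S ^ n) u := fun n u => by
    rw [← ContinuousLinearMap.toLinearMap_pow]; rfl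
  obtain ⟨z, hz⟩ := cauchySeq_tendsto_of_complete (by
    simpa only [hpow] using hS.cauchySeq_pow_apply hS2 v)
  have hSz : S z = z := by
    refine tendsto_nhds_unique ((S.continuous.tendsto z).comp hz) ?_
    simpa only [Function.comp_def, ← mul_apply_eq_comp, ← pow_succ'] using
      hz.comp (tendsto_add_atTop_nat 1)
  have horth : ∀ w ∈ K, ⟪v - z, w⟫ = 0 := by
    intro w hw
    have hconst : ∀ n, ⟪(S ^ n) v, w⟫ = ⟪v, w⟫ := fun n => by
      rw [← hpow, hS.pow n, hpow, FunLike.coe_pow_eq_iterate,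
        Function.iterate_fixed ((hK w).2 hw)]
    have hzw : ⟪z, w⟫ = ⟪v, w⟫ :=
      tendsto_nhds_unique (hz.inner tendsto_const_nhds) (by simp only [hconst, tendsto_const_nhds])
    rw [inner_sub_left, hzw, sub_self]
  rwa [eq_starProjection_of_mem_of_inner_eq_zero ((hK z).1 hSz) horth]

namespace Submodule

variable {E : Type*} [NormedAddCommGroup E] [InnerProductSpace ℝ E]
  (C₁ C₂ : Submodule ℝ E) [C₁.HasOrthogonalProjection] [C₂.HasOrthogonalProjection]

theorem isSymmetric_starProjection_mul_mul :
    ((C₁.starProjection * C₂.starProjection * C₁.starProjection : E →L[ℝ] E) :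
      E →ₗ[ℝ] E).IsSymmetric := fun u v => by
  simp only [ContinuousLinearMap.coe_coe, mul_apply_eq_comp, inner_starProjection_left_eq_right]

theorem norm_starProjection_mul_mul_apply_sq_le (v : E) :
    ‖(C₁.starProjection * C₂.starProjection * C₁.starProjection) v‖ ^ 2 ≤
      ⟪(C₁.starProjection * C₂.starProjection * C₁.starProjection) v, v⟫ := by
  set u := C₁.starProjection v
  calc ‖(C₁.starProjection * C₂.starProjection * C₁.starProjection) v‖ ^ 2
      ≤ ‖C₂.starProjection u‖ ^ 2 := by
        gcongr; exact norm_starProjection_apply_le C₁ _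
    _ = ⟪C₂.starProjection u, u⟫ := by simpa using (re_inner_starProjection_eq_normSq C₂ u).symm
    _ = ⟪(C₁.starProjection * C₂.starProjection * C₁.starProjection) v, v⟫ := by
        rw [mul_apply_eq_comp, mul_apply_eq_comp, inner_starProjection_left_eq_right C₁ _ v]

theorem starProjection_mul_mul_apply_eq_self_iff {w : E} :
    (C₁.starProjection * C₂.starProjection * C₁.starProjection) w = w ↔ w ∈ C₁ ⊓ C₂ := by
  refine ⟨fun h => ?_, fun ⟨h₁, h₂⟩ => ?_⟩
  · have h₁ : w ∈ C₁ := h ▸ starProjection_apply_mem C₁ _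
    rw [mul_apply_eq_comp, mul_apply_eq_comp, starProjection_eq_self_iff.2 h₁] at h
    have h₂ : ‖C₂.starProjection w‖ = ‖w‖ := le_antisymm (norm_starProjection_apply_le C₂ w)
      (by simpa only [h] using norm_starProjection_apply_le C₁ (C₂.starProjection w))
    exact ⟨h₁, (mem_iff_norm_starProjection C₂ w).2 h₂⟩
  · simp only [mul_apply_eq_comp, starProjection_eq_self_iff.2 h₁, starProjection_eq_self_iff.2 h₂]

end Submodule

/-- Projection onto a closed subspace is idempotent along the SOP sequence, and
the von Neumann alternating projection sequence for two closed subspaces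
converges in norm to the projection onto their intersection. -/
theorem alternating_projections_subspaces {X : Type*} [NormedAddCommGroup X]
    [InnerProductSpace ℝ X] [CompleteSpace X]
    (C : Submodule ℝ X) [Submodule.HasOrthogonalProjection C]
    (xhat : X) (x : ℕ → X) (h0 : x 0 = xhat)
    (hrec : ∀ n : ℕ, x (n + 1) = (C.subtypeL ∘L Submodule.orthogonalProjectionOnto C) (x n))
    (C₁ C₂ : Submodule ℝ X) [Submodule.HasOrthogonalProjection C₁] [Submodule.HasOrthogonalProjection C₂]
    [Submodule.HasOrthogonalProjection (C₁ ⊓ C₂)] :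
    (∀ n : ℕ, 1 ≤ n → x n = (Submodule.orthogonalProjectionOnto C xhat : X)) ∧
    Filter.Tendsto
      (fun n : ℕ =>
        ((fun v : X => ((Submodule.orthogonalProjectionOnto C₂) ((Submodule.orthogonalProjectionOnto C₁ v : X)) : X))^[n]) xhat)
      Filter.atTop (nhds ((Submodule.orthogonalProjectionOnto (C₁ ⊓ C₂) xhat : X))) := by
  refine ⟨fun n hn => ?_, ?_⟩
  · induction n, hn using Nat.le_induction with
    | base => rw [hrec, h0]; rfl
    | succ n _ ih =>
      rw [hrec, ih]
      exact C.starProjection_eq_self_iff.2 (C.starProjection_apply_mem xhat)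
  · have hiter : ∀ n,
        (fun v : X => (C₂.orthogonalProjectionOnto (C₁.orthogonalProjectionOnto v : X) : X))^[n] =
          ⇑((C₂.starProjection * C₁.starProjection) ^ n) := fun n => by
      rw [FunLike.coe_pow_eq_iterate]; rfl
    rw [← tendsto_add_atTop_iff_nat 1]
    simp only [hiter, (isIdempotentElem_starProjection C₁).mul_pow_succ, mul_apply_eq_comp]
    have hconv := ContinuousLinearMap.tendsto_pow_apply_starProjection
      (isSymmetric_starProjection_mul_mul C₁ C₂) (norm_starProjection_mul_mul_apply_sq_le C₁ C₂)
      (C₁ ⊓ C₂) (fun _ => starProjection_mul_mul_apply_eq_self_iff C₁ C₂) (C₁.starProjection xhat)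
    have hK₂ : (C₁ ⊓ C₂).starProjection (C₁.starProjection xhat) ∈ C₂ :=
      (mem_inf.1 (starProjection_apply_mem _ _)).2
    have hlim : C₂.starProjection ((C₁ ⊓ C₂).starProjection (C₁.starProjection xhat)) =
        (C₁ ⊓ C₂).starProjection xhat := by
      rw [starProjection_eq_self_iff.2 hK₂, ← ContinuousLinearMap.comp_apply,
        starProjection_comp_starProjection_of_le inf_le_left]
    rw [coe_orthogonalProjectionOnto_apply, ← hlim]
    exact (C₂.starProjection.continuous.tendsto _).comp hconv
end

section
/- Representer theorem for regularized least squares: let H be an RKHS with kernel K on 𝒳, data (x₁,y₁),…,(xₙ,yₙ) ∈ 𝒳 × ℝ, and λ > 0. Any minimizer f of J(f) = Σᵢ (f(xᵢ) − yᵢ)² + λ‖f‖²_H over H lies in the span of {K(·,x₁),…,K(·,xₙ)}, i.e., there exist c₁,…,cₙ ∈ ℝ with f = Σᵢ cᵢ K(·,xᵢ). -/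
open RealInnerProductSpace

/-!
Project a minimizer `f` orthogonally onto the span `S` of the kernel sections `K(·, xᵢ)`. By the
reproducing property the projection has the same values at every `xᵢ`, so the data-fit term does
not change, while by Pythagoras `‖f‖² = ‖P f‖² + ‖f - P f‖²`. Since `λ > 0`, minimality forces
`f - P f = 0`, i.e. `f ∈ S`.
-/

namespace Submodule

variable {E : Type*} [NormedAddCommGroup E] [InnerProductSpace ℝ E]

theorem mem_of_forall_add_mul_norm_sq_le (K : Submodule ℝ E) [K.HasOrthogonalProjection]
    {L : E → ℝ} (hL : ∀ g, L (K.starProjection g) = L g) {lam : ℝ} (hlam : 0 < lam) {f : E}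
    (hmin : ∀ g, L f + lam * ‖f‖ ^ 2 ≤ L g + lam * ‖g‖ ^ 2) :
    f ∈ K := by
  have hsq : ‖f‖ ^ 2 ≤ ‖K.starProjection f‖ ^ 2 := by
    have h := hmin (K.starProjection f)
    rw [hL] at h
    exact le_of_mul_le_mul_left (by linarith) hlam
  rw [K.mem_iff_norm_starProjection]
  exact le_antisymm (K.norm_starProjection_apply_le f)
    ((pow_le_pow_iff_left₀ (norm_nonneg _) (norm_nonneg _) two_ne_zero).mp hsq)

variable {𝒳 : Type*} (ev : E →ₗ[ℝ] (𝒳 → ℝ)) {Kf : 𝒳 → E}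

theorem apply_starProjection_eq_of_mem (hrep : ∀ (x : 𝒳) (f : E), ⟪Kf x, f⟫ = ev f x)
    {K : Submodule ℝ E} [K.HasOrthogonalProjection] {z : 𝒳} (hz : Kf z ∈ K) (g : E) :
    ev (K.starProjection g) z = ev g z := by
  rw [← hrep, ← hrep, ← inner_starProjection_left_eq_right, K.starProjection_eq_self_iff.mpr hz]

end Submodule

theorem representer_theorem_general {𝒳 H : Type*} [NormedAddCommGroup H]
    [InnerProductSpace ℝ H]
    (ev : H →ₗ[ℝ] (𝒳 → ℝ)) (Kf : 𝒳 → H)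
    (hrep : ∀ (x : 𝒳) (f : H), ⟪Kf x, f⟫ = ev f x)
    {n : ℕ} (x : Fin n → 𝒳) (y : Fin n → ℝ) (lam : ℝ) (hlam : 0 < lam)
    (f : H)
    (hmin : ∀ g : H,
      (∑ i, (ev f (x i) - y i) ^ 2) + lam * ‖f‖ ^ 2 ≤
      (∑ i, (ev g (x i) - y i) ^ 2) + lam * ‖g‖ ^ 2) :
    f ∈ Submodule.span ℝ (Set.range fun i => Kf (x i)) := by
  set S := Submodule.span ℝ (Set.range fun i => Kf (x i))
  have : FiniteDimensional ℝ S := FiniteDimensional.span_of_finite ℝ (Set.finite_range _)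
  refine S.mem_of_forall_add_mul_norm_sq_le (L := fun g => ∑ i, (ev g (x i) - y i) ^ 2)
    (fun g => ?_) hlam hmin
  exact Finset.sum_congr rfl fun i _ => by
    rw [Submodule.apply_starProjection_eq_of_mem ev hrep (Submodule.subset_span (Set.mem_range_self i))]

/-- Representer theorem for regularized least squares: any minimizer of
`J(f) = Σᵢ (f(xᵢ) - yᵢ)² + λ‖f‖²` over an RKHS lies in the span of the
kernel sections at the data points. -/
theorem representer_theorem {𝒳 H : Type*} [NormedAddCommGroup H]
    [InnerProductSpace ℝ H] [CompleteSpace H]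
    (ev : H →ₗ[ℝ] (𝒳 → ℝ)) (Kf : 𝒳 → H)
    (hrep : ∀ (x : 𝒳) (f : H), ⟪Kf x, f⟫ = ev f x)
    {n : ℕ} (x : Fin n → 𝒳) (y : Fin n → ℝ) (lam : ℝ) (hlam : 0 < lam)
    (f : H)
    (hmin : ∀ g : H,
      (∑ i, (ev f (x i) - y i) ^ 2) + lam * ‖f‖ ^ 2 ≤
      (∑ i, (ev g (x i) - y i) ^ 2) + lam * ‖g‖ ^ 2) :
    f ∈ Submodule.span ℝ (Set.range fun i => Kf (x i)) :=
  representer_theorem_general ev Kf hrep x y lam hlam f hmin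
end

section
/- Coupled-to-single reduction (Lemma 3.1): suppose λᵢ > 0 for all i and (f₁,…,fₙ) ∈ Hⁿ minimizes Σᵢ (fᵢ(xᵢ) − yᵢ)² + Σᵢ λᵢ‖fᵢ‖²_H subject to the full coupling constraints fⱼ(xᵢ) = fᵢ(xᵢ) for all i, j. Then f₁ = f₂ = ⋯ = fₙ, and if Σᵢ λᵢ = λ then the common function equals the minimizer of Σᵢ (f(xᵢ) − yᵢ)² + λ‖f‖²_H over H. -/
open RealInnerProductSpace

lemma mid_norm_sq_aux {H : Type*} [NormedAddCommGroup H] [InnerProductSpace ℝ H]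
    (a b : H) :
    ‖(2:ℝ)⁻¹ • (a + b)‖ ^ 2 = (‖a‖ ^ 2 + ‖b‖ ^ 2) / 2 - ‖(2:ℝ)⁻¹ • (a - b)‖ ^ 2 := by
  have h1 := norm_add_sq_real a b
  have h2 := norm_sub_sq_real a b
  rw [norm_smul, norm_smul]
  simp only [norm_inv, Real.norm_ofNat]
  nlinarith [h1, h2]

lemma sq_mid_le_aux (p q y : ℝ) :
    (2⁻¹ * (p + q) - y) ^ 2 ≤ ((p - y) ^ 2 + (q - y) ^ 2) / 2 := by
  nlinarith [sq_nonneg (p - q)]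

lemma norm_sq_nonpos_half_sub {H : Type*} [NormedAddCommGroup H] [InnerProductSpace ℝ H]
    {a b : H} (h : ‖(2:ℝ)⁻¹ • (a - b)‖ ^ 2 ≤ 0) : a = b := by
  have h0 : ‖(2:ℝ)⁻¹ • (a - b)‖ ^ 2 = 0 := le_antisymm h (sq_nonneg _)
  have : (2:ℝ)⁻¹ • (a - b) = 0 := by
    rwa [pow_eq_zero_iff (two_ne_zero), norm_eq_zero] at h0
  rcases smul_eq_zero.mp this with h' | h'
  · exact absurd h' (by norm_num)
  · exact sub_eq_zero.mp h'

/-- Coupled-to-single reduction (Lemma 3.1): if `(f₁,…,fₙ)` minimizes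
`Σᵢ (fᵢ(xᵢ) - yᵢ)² + Σᵢ λᵢ‖fᵢ‖²` subject to the full coupling constraints
`fⱼ(xᵢ) = fᵢ(xᵢ)` for all `i, j`, with all `λᵢ > 0`, then all the `fᵢ`
coincide, and when `Σᵢ λᵢ = λ` they all equal the minimizer `flam` of
`Σᵢ (f(xᵢ) - yᵢ)² + λ‖f‖²`. -/
theorem coupled_to_single_reduction {𝒳 H : Type*} [NormedAddCommGroup H]
    [InnerProductSpace ℝ H] [CompleteSpace H]
    (ev : H →ₗ[ℝ] (𝒳 → ℝ)) (Kf : 𝒳 → H)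
    (hrep : ∀ (x : 𝒳) (g : H), ⟪Kf x, g⟫ = ev g x)
    {n : ℕ} (x : Fin n → 𝒳) (y : Fin n → ℝ)
    (lam : Fin n → ℝ) (hlam : ∀ i, 0 < lam i)
    (f : Fin n → H)
    (hfeas : ∀ i j : Fin n, ev (f j) (x i) = ev (f i) (x i))
    (hmin : ∀ g : Fin n → H, (∀ i j : Fin n, ev (g j) (x i) = ev (g i) (x i)) →
      (∑ i, (ev (f i) (x i) - y i) ^ 2) + ∑ i, lam i * ‖f i‖ ^ 2 ≤
      (∑ i, (ev (g i) (x i) - y i) ^ 2) + ∑ i, lam i * ‖g i‖ ^ 2) :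
    (∀ i j : Fin n, f i = f j) ∧
    ∀ lamTot : ℝ, (∑ i, lam i) = lamTot →
      ∀ flam : H,
        (∀ g : H,
          (∑ i, (ev flam (x i) - y i) ^ 2) + lamTot * ‖flam‖ ^ 2 ≤
          (∑ i, (ev g (x i) - y i) ^ 2) + lamTot * ‖g‖ ^ 2) →
        ∀ i : Fin n, f i = flam := by
  classical
  set S : ℝ := ∑ k, lam k * ‖f k‖ ^ 2 with hS
  set L : ℝ := ∑ k, lam k with hL
  -- For every k, the constant vector (f k, …, f k) is feasible.
  have key : ∀ k : Fin n, S ≤ L * ‖f k‖ ^ 2 := by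
    intro k
    have h := hmin (fun _ => f k) (fun i j => rfl)
    have hsum1 : (∑ i, (ev ((fun _ => f k) i) (x i) - y i) ^ 2)
        = ∑ i, (ev (f i) (x i) - y i) ^ 2 := by
      apply Finset.sum_congr rfl
      intro i _
      rw [hfeas i k]
    have hsum2 : (∑ i, lam i * ‖(fun _ => f k) i‖ ^ 2) = L * ‖f k‖ ^ 2 := by
      simp [hL, Finset.sum_mul]
    rw [hsum1, hsum2] at h
    linarith
  have heq : ∀ i j : Fin n, f i = f j := by
    intro i j
    have hn : (Finset.univ : Finset (Fin n)).Nonempty := ⟨i, Finset.mem_univ i⟩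
    have hLpos : 0 < L := Finset.sum_pos (fun k _ => hlam k) hn
    -- each ‖f k‖² is at least S / L
    have hck : ∀ k : Fin n, S / L ≤ ‖f k‖ ^ 2 := by
      intro k
      rw [div_le_iff₀ hLpos]
      linarith [key k]
    -- and they all equal S / L
    have hzero : ∑ k, lam k * (‖f k‖ ^ 2 - S / L) = 0 := by
      have : ∑ k, lam k * (‖f k‖ ^ 2 - S / L)
          = S - L * (S / L) := by
        rw [hS, hL]
        rw [Finset.sum_mul]
        rw [← Finset.sum_sub_distrib]
        apply Finset.sum_congr rfl
        intro k _
        ring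
      rw [this, mul_div_cancel₀ _ (ne_of_gt hLpos)]
      ring
    have hall : ∀ k : Fin n, ‖f k‖ ^ 2 = S / L := by
      intro k
      have hterm := (Finset.sum_eq_zero_iff_of_nonneg
        (fun k _ => mul_nonneg (le_of_lt (hlam k)) (by linarith [hck k]))).mp
        hzero k (Finset.mem_univ k)
      rcases mul_eq_zero.mp hterm with h' | h'
      · exact absurd h' (ne_of_gt (hlam k))
      · linarith
    -- midpoint candidate
    set m : H := (2:ℝ)⁻¹ • (f i + f j) with hm
    have hmid := hmin (fun _ => m) (fun a b => rfl)
    have hevm : ∀ a : Fin n, ev m (x a) = ev (f a) (x a) := by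
      intro a
      have : ev m = (2:ℝ)⁻¹ • (ev (f i) + ev (f j)) := by
        rw [hm, map_smul, map_add]
      rw [this, Pi.smul_apply, Pi.add_apply, hfeas a i, hfeas a j, smul_eq_mul]
      ring
    have hsum1 : (∑ a, (ev ((fun _ => m) a) (x a) - y a) ^ 2)
        = ∑ a, (ev (f a) (x a) - y a) ^ 2 := by
      apply Finset.sum_congr rfl
      intro a _
      rw [hevm a]
    have hsum2 : (∑ a, lam a * ‖(fun _ => m) a‖ ^ 2) = L * ‖m‖ ^ 2 := by
      simp [hL, Finset.sum_mul]
    rw [hsum1, hsum2] at hmid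
    have hnm : ‖m‖ ^ 2 = (‖f i‖ ^ 2 + ‖f j‖ ^ 2) / 2 - ‖(2:ℝ)⁻¹ • (f i - f j)‖ ^ 2 := by
      rw [hm]; exact mid_norm_sq_aux (f i) (f j)
    have hSm : S ≤ L * ‖m‖ ^ 2 := by linarith
    have hd : ‖(2:ℝ)⁻¹ • (f i - f j)‖ ^ 2 ≤ 0 := by
      have h1 := hall i
      have h2 := hall j
      have hSL : L * (S / L) = S := mul_div_cancel₀ _ (ne_of_gt hLpos)
      nlinarith [hSm, hnm]
    exact norm_sq_nonpos_half_sub hd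
  refine ⟨heq, ?_⟩
  intro lamTot hLT flam hflam i
  subst hLT
  have hn : (Finset.univ : Finset (Fin n)).Nonempty := ⟨i, Finset.mem_univ i⟩
  have hLpos : 0 < L := Finset.sum_pos (fun k _ => hlam k) hn
  set a : H := f i with ha
  have hfa : ∀ k : Fin n, f k = a := fun k => heq k i
  -- objective of the coupled problem equals D(a) + L‖a‖²
  have hDa : (∑ k, (ev (f k) (x k) - y k) ^ 2) = ∑ k, (ev a (x k) - y k) ^ 2 := by
    apply Finset.sum_congr rfl
    intro k _
    rw [hfa k]
  have hNa : (∑ k, lam k * ‖f k‖ ^ 2) = L * ‖a‖ ^ 2 := by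
    rw [hL, Finset.sum_mul]
    apply Finset.sum_congr rfl
    intro k _
    rw [hfa k]
  -- J(a) ≤ J(flam)
  have h1 : (∑ k, (ev a (x k) - y k) ^ 2) + L * ‖a‖ ^ 2 ≤
      (∑ k, (ev flam (x k) - y k) ^ 2) + L * ‖flam‖ ^ 2 := by
    have h := hmin (fun _ => flam) (fun i j => rfl)
    have hSa : S = L * ‖a‖ ^ 2 := by rw [hS]; exact hNa
    rw [hDa, hSa] at h
    have : (∑ k, lam k * ‖(fun _ => flam) k‖ ^ 2) = L * ‖flam‖ ^ 2 := by
      simp [hL, Finset.sum_mul]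
    rw [this] at h
    exact h
  -- J(flam) ≤ J(a)
  have h2 := hflam a
  -- midpoint
  set m : H := (2:ℝ)⁻¹ • (a + flam) with hm
  have h3 := hflam m
  have hevm : ∀ k : Fin n, ev m (x k) = 2⁻¹ * (ev a (x k) + ev flam (x k)) := by
    intro k
    have : ev m = (2:ℝ)⁻¹ • (ev a + ev flam) := by
      rw [hm, map_smul, map_add]
    rw [this, Pi.smul_apply, Pi.add_apply, smul_eq_mul]
  have hDm : (∑ k, (ev m (x k) - y k) ^ 2) ≤
      ((∑ k, (ev a (x k) - y k) ^ 2) + ∑ k, (ev flam (x k) - y k) ^ 2) / 2 := by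
    rw [← Finset.sum_add_distrib, Finset.sum_div]
    apply Finset.sum_le_sum
    intro k _
    rw [hevm k]
    exact sq_mid_le_aux _ _ _
  have hnm : ‖m‖ ^ 2 = (‖a‖ ^ 2 + ‖flam‖ ^ 2) / 2 - ‖(2:ℝ)⁻¹ • (a - flam)‖ ^ 2 := by
    rw [hm]; exact mid_norm_sq_aux a flam
  have hd : ‖(2:ℝ)⁻¹ • (a - flam)‖ ^ 2 ≤ 0 := by nlinarith [h1, h2, h3, hDm, hnm]
  exact norm_sq_nonpos_half_sub hd
end
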